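/- arXiv:2009.04581 — 4 statements merged into one kernel-verified Lean document; each statement's English description precedes it below -/
import Mathlib

section
/- If x : ℝ → ℝ satisfies the logistic-type ODE x'(τ) = x(τ)(1 - x(τ))·g(τ) for a continuous function g, and x(0) ∈ (0,1), then x(τ) ∈ (0,1) for all τ ≥ 0. -/
/-!
Both `x` and `1 - x` solve linear equations `y' = y h` with continuous coefficients
(`h = (1 - x) g` and `h = -x g` respectively), so each equals its initial value times an
exponential and keeps the sign it has at `0`.
-/

open Real

theorem eq_mul_exp_integral_of_hasDerivAt {y h : ℝ → ℝ} (hh : Continuous h)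
    (hy : ∀ t, HasDerivAt y (y t * h t) t) (a t : ℝ) :
    y t = y a * exp (∫ s in a..t, h s) := by
  set H : ℝ → ℝ := fun t => ∫ s in a..t, h s
  have hH : ∀ t, HasDerivAt H (h t) t := fun t => (hh.integral_hasStrictDerivAt a t).hasDerivAt
  have hconst : ∀ t, HasDerivAt (fun t => y t * exp (-H t)) 0 t := fun t =>
    ((hy t).fun_mul (hH t).fun_neg.exp).congr_deriv (by ring)
  have key : y t * exp (-H t) = y a * exp (-H a) :=
    is_const_of_deriv_eq_zero (fun t => (hconst t).differentiableAt)
      (fun t => (hconst t).deriv) t a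
  have hHa : H a = 0 := intervalIntegral.integral_same
  rw [hHa, neg_zero, exp_zero, mul_one] at key
  rw [← key, mul_assoc, ← exp_add, neg_add_cancel, exp_zero, mul_one]

theorem pos_of_hasDerivAt_mul {y h : ℝ → ℝ} (hh : Continuous h)
    (hy : ∀ t, HasDerivAt y (y t * h t) t) {a : ℝ} (ha : 0 < y a) (t : ℝ) : 0 < y t := by
  rw [eq_mul_exp_integral_of_hasDerivAt hh hy a t]
  exact mul_pos ha (exp_pos _)

theorem logistic_stays_in_unit_interval
    (x g : ℝ → ℝ) (hg : Continuous g)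
    (hx : ∀ τ : ℝ, HasDerivAt x (x τ * (1 - x τ) * g τ) τ)
    (h0 : x 0 ∈ Set.Ioo (0 : ℝ) 1) :
    ∀ τ : ℝ, 0 ≤ τ → x τ ∈ Set.Ioo (0 : ℝ) 1 := by
  have hxc : Continuous x := continuous_iff_continuousAt.2 fun τ => (hx τ).continuousAt
  have hx_lin : ∀ τ, HasDerivAt x (x τ * ((1 - x τ) * g τ)) τ := fun τ => by
    simpa only [mul_assoc] using hx τ
  have hcompl_lin : ∀ τ, HasDerivAt (fun τ => 1 - x τ) ((1 - x τ) * (-x τ * g τ)) τ := fun τ =>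
    ((hx τ).const_sub 1).congr_deriv (by ring)
  intro τ _
  have hpos := pos_of_hasDerivAt_mul ((continuous_const.sub hxc).mul hg) hx_lin h0.1 τ
  have hcompl_pos := pos_of_hasDerivAt_mul (hxc.neg.mul hg) hcompl_lin (sub_pos.2 h0.2) τ
  exact ⟨hpos, sub_pos.1 hcompl_pos⟩
end

section
/- Let k > 1, R₀ > 0, a₀, a₁, a₂ > 0 with a₁ ≠ k·a₀, and define R_p = (a₁ - k·a₂)/(a₁ - k·a₀). If R₀ > R_p > 1, then the point with S̄ = 1/R_p, Ī = (1 - 1/R_p)/k, R̄ = (1 - 1/k)(1 - 1/R_p), x̄ = 1 - R_p/R₀ satisfies all four equilibrium equations of the behavioral SIR model, and moreover x̄ ∈ (0,1), S̄ ∈ (0,1), Ī ∈ (0,1). -/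
/-!
At `P₅` the effective reproduction number `(1 - x̄) R₀ S̄` equals `1`, which balances the `S` and
`I` equations, and `S̄ = 1 / R_p` is precisely the susceptible level at which the payoff
`-a₀ + a₁ Ī + a₂ S̄` of the protective behaviour vanishes, which balances the `x` equation.
-/

open Set

section UnitInterval

variable {K : Type*} [Field K] [LinearOrder K] [IsStrictOrderedRing K]

lemma div_mem_Ioo_zero_one {a b : K} (ha : 0 < a) (hab : a < b) : a / b ∈ Ioo 0 1 :=
  ⟨div_pos ha (ha.trans hab), (div_lt_one (ha.trans hab)).2 hab⟩

lemma one_sub_mem_Ioo_zero_one {t : K} (ht : t ∈ Ioo 0 1) : 1 - t ∈ Ioo 0 1 :=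
  ⟨sub_pos.2 ht.2, sub_lt_self 1 ht.1⟩

end UnitInterval

section Equilibrium

variable {K : Type*} [Field K]

lemma effective_reproduction_eq_one {R₀ Rp : K} (hR₀ : R₀ ≠ 0) (hRp : Rp ≠ 0) :
    (1 - (1 - Rp / R₀)) * R₀ * (1 / Rp) = 1 := by
  field_simp
  ring

lemma payoff_eq_zero_of_eq_div {k a₀ a₁ a₂ Rp : K} (hk : k ≠ 0) (hRp0 : Rp ≠ 0)
    (hne : a₁ ≠ k * a₀) (hRp : Rp = (a₁ - k * a₂) / (a₁ - k * a₀)) :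
    -a₀ + a₁ * ((1 - 1 / Rp) / k) + a₂ * (1 / Rp) = 0 := by
  have hcross : Rp * (a₁ - k * a₀) = a₁ - k * a₂ := by
    rw [hRp]; exact div_mul_cancel₀ _ (sub_ne_zero.2 hne)
  field_simp
  linear_combination hcross

end Equilibrium

theorem P5_is_equilibrium_general (k R₀ a₀ a₁ a₂ : ℝ)
    (hk : 1 < k) (hR₀ : 0 < R₀)
    (hne : a₁ ≠ k * a₀)
    (Rp : ℝ) (hRp : Rp = (a₁ - k * a₂) / (a₁ - k * a₀))
    (h1 : 1 < Rp) (h2 : Rp < R₀) :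
    let S := 1 / Rp
    let I := (1 - 1 / Rp) / k
    let R := (1 - 1 / k) * (1 - 1 / Rp)
    let x := 1 - Rp / R₀
    (1 - (1 - x) * k * R₀ * S * I - S = 0) ∧
    ((1 - x) * k * R₀ * S * I - k * I = 0) ∧
    ((k - 1) * I - R = 0) ∧
    (x * (1 - x) * (-a₀ + a₁ * I + a₂ * S) = 0) ∧
    x ∈ Set.Ioo (0 : ℝ) 1 ∧ S ∈ Set.Ioo (0 : ℝ) 1 ∧ I ∈ Set.Ioo (0 : ℝ) 1 := by
  intro S I R x
  have hk0 : k ≠ 0 := (zero_lt_one.trans hk).ne'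
  have hRp0 : Rp ≠ 0 := (zero_lt_one.trans h1).ne'
  have hReff : (1 - x) * R₀ * S = 1 := effective_reproduction_eq_one hR₀.ne' hRp0
  have hkI : k * I = 1 - S := mul_div_cancel₀ _ hk0
  have hS : S ∈ Ioo 0 1 := div_mem_Ioo_zero_one one_pos h1
  have h1S : 1 - S ∈ Ioo 0 1 := one_sub_mem_Ioo_zero_one hS
  refine ⟨?_, ?_, ?_, ?_, one_sub_mem_Ioo_zero_one (div_mem_Ioo_zero_one (one_pos.trans h1) h2),
    hS, div_mem_Ioo_zero_one h1S.1 (h1S.2.trans hk)⟩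
  · linear_combination -(k * I) * hReff - hkI
  · linear_combination k * I * hReff
  · simp only [I, R]
    field_simp
    ring
  · rw [payoff_eq_zero_of_eq_div hk0 hRp0 hne hRp, mul_zero]

theorem P5_is_equilibrium (k R₀ a₀ a₁ a₂ : ℝ)
    (hk : 1 < k) (hR₀ : 0 < R₀)
    (ha₀ : 0 < a₀) (ha₁ : 0 < a₁) (ha₂ : 0 < a₂)
    (hne : a₁ ≠ k * a₀)
    (Rp : ℝ) (hRp : Rp = (a₁ - k * a₂) / (a₁ - k * a₀))
    (h1 : 1 < Rp) (h2 : Rp < R₀) :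
    let S := 1 / Rp
    let I := (1 - 1 / Rp) / k
    let R := (1 - 1 / k) * (1 - 1 / Rp)
    let x := 1 - Rp / R₀
    (1 - (1 - x) * k * R₀ * S * I - S = 0) ∧
    ((1 - x) * k * R₀ * S * I - k * I = 0) ∧
    ((k - 1) * I - R = 0) ∧
    (x * (1 - x) * (-a₀ + a₁ * I + a₂ * S) = 0) ∧
    x ∈ Set.Ioo (0 : ℝ) 1 ∧ S ∈ Set.Ioo (0 : ℝ) 1 ∧ I ∈ Set.Ioo (0 : ℝ) 1 :=
  P5_is_equilibrium_general k R₀ a₀ a₁ a₂ hk hR₀ hne Rp hRp h1 h2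
end

section
/- Let k > 1, R₀ > 1. For any x̄ ∈ (0, (R₀-1)/R₀), the point with S̄ = 1/(R₀(1-x̄)), Ī = (1-S̄)/k, R̄ = (1-1/k)(1-S̄), together with x̄, satisfies the four equilibrium equations of the behavioral SIR model provided k·a₀ = a₁ = k·a₂. -/
/-! On `P₆` the susceptible fraction satisfies `(1 - x̄) R₀ S̄ = 1`, so the force of infection
`(1 - x̄) k R₀ S̄ Ī` reduces to `k Ī = 1 - S̄`, which gives the three epidemic equations.
Under `k a₀ = a₁ = k a₂` the payoff `-a₀ + a₁ Ī + a₂ S̄` equals `a₂ (-1 + (1 - S̄) + S̄)`,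
so it vanishes whatever `S̄` is, and every `x̄` is admissible. -/

lemma lt_one_of_lt_sub_one_div {R x : ℝ} (hR : 0 < R) (hx : x < (R - 1) / R) : x < 1 :=
  hx.trans_le <| (div_le_one hR).2 (by linarith)

lemma payoff_eq_zero_of_degenerate {k a₀ a₁ a₂ : ℝ} (hk : k ≠ 0)
    (hdeg : k * a₀ = a₁ ∧ a₁ = k * a₂) (S : ℝ) :
    -a₀ + a₁ * ((1 - S) / k) + a₂ * S = 0 := by
  obtain ⟨rfl, h⟩ := hdeg
  obtain rfl : a₀ = a₂ := mul_left_cancel₀ hk h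
  field_simp
  ring

theorem P6_is_equilibrium_general (k R₀ a₀ a₁ a₂ : ℝ)
    (hk : 1 < k) (hR₀ : 1 < R₀)
    (hdeg : k * a₀ = a₁ ∧ a₁ = k * a₂)
    (x : ℝ) (hx : x ∈ Set.Ioo (0 : ℝ) ((R₀ - 1) / R₀)) :
    let S := 1 / (R₀ * (1 - x))
    let I := (1 - S) / k
    let R := (1 - 1 / k) * (1 - S)
    (1 - (1 - x) * k * R₀ * S * I - S = 0) ∧
    ((1 - x) * k * R₀ * S * I - k * I = 0) ∧
    ((k - 1) * I - R = 0) ∧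
    (x * (1 - x) * (-a₀ + a₁ * I + a₂ * S) = 0) := by
  intro S I R
  have hk0 : k ≠ 0 := (zero_lt_one.trans hk).ne'
  have hx1 : 1 - x ≠ 0 := (sub_pos.2 (lt_one_of_lt_sub_one_div (zero_lt_one.trans hR₀) hx.2)).ne'
  have hS : (1 - x) * R₀ * S = 1 := by
    rw [mul_comm (1 - x)]
    exact mul_one_div_cancel (mul_ne_zero (zero_lt_one.trans hR₀).ne' hx1)
  have hkI : k * I = 1 - S := mul_div_cancel₀ _ hk0
  refine ⟨by linear_combination (-k * I) * hS - hkI, by linear_combination (k * I) * hS,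
    by simp only [I, R]; field_simp; ring, ?_⟩
  rw [payoff_eq_zero_of_degenerate hk0 hdeg S, mul_zero]

theorem P6_is_equilibrium (k R₀ a₀ a₁ a₂ : ℝ)
    (hk : 1 < k) (hR₀ : 1 < R₀)
    (ha₀ : 0 < a₀) (ha₁ : 0 < a₁) (ha₂ : 0 < a₂)
    (hdeg : k * a₀ = a₁ ∧ a₁ = k * a₂)
    (x : ℝ) (hx : x ∈ Set.Ioo (0 : ℝ) ((R₀ - 1) / R₀)) :
    let S := 1 / (R₀ * (1 - x))
    let I := (1 - S) / k
    let R := (1 - 1 / k) * (1 - S)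
    (1 - (1 - x) * k * R₀ * S * I - S = 0) ∧
    ((1 - x) * k * R₀ * S * I - k * I = 0) ∧
    ((k - 1) * I - R = 0) ∧
    (x * (1 - x) * (-a₀ + a₁ * I + a₂ * S) = 0) :=
  P6_is_equilibrium_general k R₀ a₀ a₁ a₂ hk hR₀ hdeg x hx
end

section
/- Suppose x : ℝ → ℝ and R : ℝ → ℝ are differentiable with x'(τ) = a₀·x(τ)(1-x(τ))·R'(τ) for all τ, where a₀ ∈ ℝ, and x(0) ∈ (0,1). Then there exists a constant C₁ > 0 such that x(τ) = e^{a₀R(τ)}/(e^{a₀R(τ)} + C₁) for all τ. -/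
/-!
Along any solution, `(1 - x) / x · e^{a₀ R}` has zero derivative wherever `x ≠ 0`, so it is
locally constant on the open set where `x ∈ (0,1)`. Fixing its value `C > 0` at time `0`, the
set of times at which `x = e^{a₀ R} / (e^{a₀ R} + C)` is therefore open; it is closed by
continuity, and it contains `0`. Since `ℝ` is connected, it is all of `ℝ`.
-/

open Set

noncomputable def logisticInvariant (a : ℝ) (x R : ℝ → ℝ) (t : ℝ) : ℝ :=
  (1 - x t) / x t * Real.exp (a * R t)

theorem hasDerivAt_logisticInvariant {a R' τ : ℝ} {x R : ℝ → ℝ}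
    (hx : HasDerivAt x (a * x τ * (1 - x τ) * R') τ) (hR : HasDerivAt R R' τ) (hτ : x τ ≠ 0) :
    HasDerivAt (logisticInvariant a x R) 0 τ := by
  have h := (((hasDerivAt_const τ 1).sub hx).div hx hτ).mul (hR.const_mul a).exp
  refine h.congr_deriv ?_
  simp only [Pi.sub_apply, Pi.div_apply]
  field_simp
  ring

theorem eq_div_add_iff_mem_Ioo {x E C : ℝ} (hE : 0 < E) (hC : 0 < C) :
    x = E / (E + C) ↔ x ∈ Ioo 0 1 ∧ (1 - x) / x * E = C := by
  constructor
  · rintro rfl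
    refine ⟨⟨by positivity, (div_lt_one (by positivity)).2 (by linarith)⟩, ?_⟩
    field_simp
    ring
  · rintro ⟨⟨hx0, -⟩, hxC⟩
    rw [eq_div_iff (by positivity), ← hxC]
    field_simp
    ring

theorem replicator_explicit (a₀ : ℝ) (x R : ℝ → ℝ)
    (hx : Differentiable ℝ x) (hR : Differentiable ℝ R)
    (hode : ∀ τ : ℝ, deriv x τ = a₀ * x τ * (1 - x τ) * deriv R τ)
    (h0 : x 0 ∈ Set.Ioo (0 : ℝ) 1) :
    ∃ C₁ : ℝ, 0 < C₁ ∧ ∀ τ : ℝ,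
      x τ = Real.exp (a₀ * R τ) / (Real.exp (a₀ * R τ) + C₁) := by
  set C := logisticInvariant a₀ x R 0
  have hC : 0 < C := mul_pos (div_pos (sub_pos.2 h0.2) h0.1) (Real.exp_pos _)
  have hderiv : ∀ τ, x τ ≠ 0 → HasDerivAt (logisticInvariant a₀ x R) 0 τ := fun τ hτ =>
    hasDerivAt_logisticInvariant (hode τ ▸ (hx τ).hasDerivAt) (hR τ).hasDerivAt hτ
  set S := {τ | x τ = Real.exp (a₀ * R τ) / (Real.exp (a₀ * R τ) + C)}
  have hS : S = x ⁻¹' Ioo 0 1 ∩ logisticInvariant a₀ x R ⁻¹' {C} := by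
    ext τ
    exact eq_div_add_iff_mem_Ioo (Real.exp_pos _) hC
  have hS_open : IsOpen S := by
    rw [hS]
    exact (isOpen_Ioo.preimage hx.continuous).isOpen_inter_preimage_of_deriv_eq_zero
      (fun τ hτ => (hderiv τ hτ.1.ne').differentiableAt.differentiableWithinAt)
      (fun τ hτ => (hderiv τ hτ.1.ne').deriv) _
  have hE : Continuous fun τ => Real.exp (a₀ * R τ) := (continuous_const.mul hR.continuous).rexp
  have hS_closed : IsClosed S :=
    isClosed_eq hx.continuous (hE.div (hE.add continuous_const) fun τ => by positivity)
  have hS_univ : S = univ := IsClopen.eq_univ ⟨hS_closed, hS_open⟩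
    ⟨0, (eq_div_add_iff_mem_Ioo (Real.exp_pos _) hC).2 ⟨h0, rfl⟩⟩
  exact ⟨C, hC, eq_univ_iff_forall.1 hS_univ⟩
end
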